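/- arXiv:0712.3412 — 2 statements merged into one kernel-verified Lean document; each statement's English description precedes it below -/
import Mathlib

section
/- Let φ₀ be a monotonic enhancement function of range R₀ on the square lattice ℤ², and define Φ₀ by Φ₀(ω) = {o} if o ∈ φ_x(ω) for some x ∈ 𝔹₀ = ℤ² ∩ B(R₀), and Φ₀(ω) = ∅ otherwise (so Φ₀ is an enhancement function of range 2R₀). Then φ₀ is essential if and only if Φ₀ is essential. -/
/-!
`Φ₀` adds at most the origin `o`, and only when `o ∈ φ_x(ω)` for some `x`; translating by `x`
turns a witness of essentiality of `Φ₀` into one of `φ₀`. Conversely, if `ω ∪ φ₀(ω)` contains a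
doubly-infinite self-repelling path and `ω` does not, add the finitely many sites of `φ₀(ω)` one at
a time: some site `y` is pivotal for a configuration `ω' ⊇ ω`, and by monotonicity `y ∈ φ_o(ω')`.
Translating `ω'` by `y` moves `y` to the origin, where `Φ₀` now adds it.
-/

open MeasureTheory Filter Set Topology
open scoped ENNReal

namespace PercEnh

/-- Sites of the lattice (vertex set `ℤ²`). -/
abbrev Site : Type := ℤ × ℤ

/-- A configuration: the set of open sites. -/
abbrev Config : Type := Set Site

/-- Square-lattice (`ℤ²`-) adjacency: `‖x − y‖₁ = 1`. -/
def adjZ2 (x y : Site) : Prop := |x.1 - y.1| + |x.2 - y.2| = 1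

/-- Matching (star) adjacency: `x ≠ y` and `‖x − y‖_∞ = 1`. -/
def adjStar (x y : Site) : Prop := x ≠ y ∧ max |x.1 - y.1| |x.2 - y.2| = 1

/-- Euclidean norm of a site. -/
noncomputable def siteNorm (x : Site) : ℝ := Real.sqrt ((x.1 : ℝ) ^ 2 + (x.2 : ℝ) ^ 2)

/-- Sites in the closed Euclidean ball of radius `r` centred at the origin. -/
def siteBall (r : ℝ) : Set Site := {x | siteNorm x ≤ r}

/-- The shifted configuration `τ_x ω = {y − x : y ∈ ω}`. -/
def shiftConfig (x : Site) (ω : Config) : Config := {y | y + x ∈ ω}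

/-- An enhancement function of (finite) range `R₀`: takes values in subsets of
`𝔹₀ = ℤ² ∩ B(R₀)` and depends only on the restriction of the configuration to `𝔹₀`. -/
def IsEnhancement (R₀ : ℝ) (φ : Config → Config) : Prop :=
  0 ≤ R₀ ∧ (∀ ω, φ ω ⊆ siteBall R₀) ∧
    ∀ ω ω' : Config, ω ∩ siteBall R₀ = ω' ∩ siteBall R₀ → φ ω = φ ω'

/-- A monotonic enhancement function. -/
def Monotonic (φ : Config → Config) : Prop := ∀ ω ω' : Config, ω ⊆ ω' → φ ω ⊆ φ ω'

/-- The translate `φ_x(ω) = x + φ₀(τ_x ω)`. -/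
def enhAt (φ : Config → Config) (x : Site) (ω : Config) : Config :=
  (fun z => z + x) '' φ (shiftConfig x ω)

/-- The enhanced configuration `ω̂(ω, α) = ω ∪ ⋃_{x : α(x)=1} φ_x(ω)`. -/
def enhanced (φ : Config → Config) (ω : Config) (α : Site → Bool) : Config :=
  ω ∪ {y | ∃ x, α x = true ∧ y ∈ enhAt φ x ω}

/-- The fully (deterministically, with `s = 1`) enhanced configuration `ω̃`. -/
def fullyEnhanced (φ : Config → Config) (ω : Config) : Config :=
  ω ∪ {y | ∃ x, y ∈ enhAt φ x ω}

/-- `ω` contains a doubly-infinite self-repelling path (w.r.t. adjacency `adj`):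
a two-sided sequence of distinct sites of `ω` in which exactly the consecutive
pairs are adjacent. -/
def HasDISRPath (adj : Site → Site → Prop) (ω : Config) : Prop :=
  ∃ γ : ℤ → Site, Function.Injective γ ∧ (∀ i, γ i ∈ ω) ∧
    ∀ i j : ℤ, adj (γ i) (γ j) ↔ (j = i + 1 ∨ i = j + 1)

/-- The enhancement is essential: some configuration without a doubly-infinite
self-repelling path acquires one upon enhancement at the origin. -/
def Essential (adj : Site → Site → Prop) (φ : Config → Config) : Prop :=
  ∃ ω : Config, ¬ HasDISRPath adj ω ∧ HasDISRPath adj (ω ∪ φ ω)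

/-- A (finite, nonempty) path w.r.t. adjacency `adj`: distinct sites,
consecutive ones adjacent. -/
def IsPathOn (adj : Site → Site → Prop) (l : List Site) : Prop :=
  l ≠ [] ∧ l.Nodup ∧ l.Chain' adj

/-- `x` and `y` are joined by a path of sites of `ω`. -/
def ConnectedIn (adj : Site → Site → Prop) (ω : Config) (x y : Site) : Prop :=
  ∃ l : List Site, IsPathOn adj l ∧ (∀ z ∈ l, z ∈ ω) ∧
    l.head? = some x ∧ l.getLast? = some y

/-- `x` belongs to an infinite open cluster of `ω`. -/
def InInfiniteCluster (adj : Site → Site → Prop) (ω : Config) (x : Site) : Prop :=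
  {y | ConnectedIn adj ω x y}.Infinite

/-- `ω` contains an infinite open cluster. -/
def HasInfiniteCluster (adj : Site → Site → Prop) (ω : Config) : Prop :=
  ∃ x, InInfiniteCluster adj ω x

/-- The configuration corresponding to `η : Site → Bool`. -/
def toConfig (η : Site → Bool) : Config := {x | η x = true}

/-- A cylinder event. -/
def cylinder (F : Finset Site) (b : Site → Bool) : Set (Site → Bool) :=
  {η | ∀ x ∈ F, η x = b x}

/-- `μ` is the Bernoulli product measure with density `p` of open sites. -/
def IsBernoulli (p : ℝ) (μ : Measure (Site → Bool)) : Prop :=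
  IsProbabilityMeasure μ ∧
    ∀ (F : Finset Site) (b : Site → Bool),
      μ (cylinder F b) = ∏ x ∈ F, ENNReal.ofReal (if b x then p else 1 - p)

/-- The percolation probability `θ`: the probability that the origin lies in an
infinite open cluster. -/
noncomputable def theta (adj : Site → Site → Prop) (μ : Measure (Site → Bool)) : ℝ :=
  (μ {η | InInfiniteCluster adj (toConfig η) 0}).toReal

/-- The percolation probability of the enhanced process (`μ` the law of the
configuration, `ν` the law of the activation variables). -/
noncomputable def thetaEnh (adj : Site → Site → Prop) (φ : Config → Config)
    (μ ν : Measure (Site → Bool)) : ℝ :=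
  ((μ.prod ν) {ηα | InInfiniteCluster adj (enhanced φ (toConfig ηα.1) ηα.2) 0}).toReal

/-- The critical point `p_c = sup {p ∈ [0,1] : θ(p) = 0}` for the family `P`. -/
noncomputable def pcOf (adj : Site → Site → Prop) (P : ℝ → Measure (Site → Bool)) : ℝ :=
  sSup {p | p ∈ Icc (0:ℝ) 1 ∧ theta adj (P p) = 0}

/-- The connectivity function `τ_p(x)`. -/
noncomputable def tau (adj : Site → Site → Prop) (μ : Measure (Site → Bool)) (x : Site) : ℝ :=
  (μ {η | ConnectedIn adj (toConfig η) 0 x}).toReal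

/-- The connectivity function `τ_{p,s}(x)` of the enhanced process. -/
noncomputable def tauEnh (adj : Site → Site → Prop) (φ : Config → Config)
    (μ ν : Measure (Site → Bool)) (x : Site) : ℝ :=
  ((μ.prod ν) {ηα | ConnectedIn adj (enhanced φ (toConfig ηα.1) ηα.2) 0 x}).toReal

/-- The mean cluster size `χ(p) = E_p‖C‖ = ∑_x τ_p(x)`. -/
noncomputable def chi (adj : Site → Site → Prop) (μ : Measure (Site → Bool)) : ℝ≥0∞ :=
  ∑' x : Site, μ {η | ConnectedIn adj (toConfig η) 0 x}

/-- The mean cluster size of the enhanced process. -/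
noncomputable def chiEnh (adj : Site → Site → Prop) (φ : Config → Config)
    (μ ν : Measure (Site → Bool)) : ℝ≥0∞ :=
  ∑' x : Site, (μ.prod ν) {ηα | ConnectedIn adj (enhanced φ (toConfig ηα.1) ηα.2) 0 x}


/-- The simplified enhancement function `Φ₀` built from `φ₀`: it adds the origin iff
`o ∈ φ_x(ω)` for some `x ∈ 𝔹₀ = ℤ² ∩ B(R₀)` (an enhancement function of range `2R₀`). -/
def bigPhi (R₀ : ℝ) (φ : Config → Config) : Config → Config := fun ω =>
  {z | z = 0 ∧ ∃ x ∈ siteBall R₀, (0 : Site) ∈ enhAt φ x ω}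

theorem HasDISRPath.mono {adj : Site → Site → Prop} {ω ω' : Config} (h : ω ⊆ ω')
    (hω : HasDISRPath adj ω) : HasDISRPath adj ω' :=
  let ⟨γ, hγ, hmem, hadj⟩ := hω
  ⟨γ, hγ, fun i => h (hmem i), hadj⟩

theorem adjZ2_add_right (a b v : Site) : adjZ2 (a + v) (b + v) ↔ adjZ2 a b := by
  simp only [adjZ2, Prod.fst_add, Prod.snd_add, add_sub_add_right_eq_sub]

theorem HasDISRPath.shiftConfig {adj : Site → Site → Prop}
    (hadj : ∀ a b v : Site, adj (a + v) (b + v) ↔ adj a b) {ω : Config}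
    (hω : HasDISRPath adj ω) (v : Site) : HasDISRPath adj (shiftConfig v ω) := by
  obtain ⟨γ, hγ, hmem, hγadj⟩ := hω
  refine ⟨fun i => γ i - v, (sub_left_injective).comp hγ, fun i => ?_, fun i j => ?_⟩
  · simpa [PercEnh.shiftConfig] using hmem i
  · rw [← hγadj, ← hadj (γ i - v) (γ j - v) v, sub_add_cancel, sub_add_cancel]

theorem hasDISRPath_shiftConfig_iff {adj : Site → Site → Prop}
    (hadj : ∀ a b v : Site, adj (a + v) (b + v) ↔ adj a b) (v : Site) (ω : Config) :
    HasDISRPath adj (shiftConfig v ω) ↔ HasDISRPath adj ω := by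
  refine ⟨fun h => ?_, fun h => h.shiftConfig hadj v⟩
  simpa [PercEnh.shiftConfig] using h.shiftConfig hadj (-v)

theorem shiftConfig_insert (v y : Site) (ω : Config) :
    shiftConfig v (insert y ω) = insert (y - v) (shiftConfig v ω) := by
  ext z
  simp [shiftConfig, eq_sub_iff_add_eq]

theorem shiftConfig_neg_shiftConfig (v : Site) (ω : Config) :
    shiftConfig (-v) (shiftConfig v ω) = ω := by
  ext z
  simp [shiftConfig]

theorem mem_enhAt_iff {φ : Config → Config} {x z : Site} {ω : Config} :
    z ∈ enhAt φ x ω ↔ z - x ∈ φ (shiftConfig x ω) := by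
  simp [enhAt, sub_eq_add_neg]

theorem abs_fst_le_siteNorm (x : Site) : |(x.1 : ℝ)| ≤ siteNorm x :=
  Real.abs_le_sqrt (le_add_of_nonneg_right (sq_nonneg _))

theorem abs_snd_le_siteNorm (x : Site) : |(x.2 : ℝ)| ≤ siteNorm x :=
  Real.abs_le_sqrt (le_add_of_nonneg_left (sq_nonneg _))

theorem mem_Icc_ceil_of_abs_le {n : ℤ} {r : ℝ} (h : |(n : ℝ)| ≤ r) : n ∈ Icc (-⌈r⌉) ⌈r⌉ := by
  obtain ⟨hlo, hhi⟩ := abs_le.1 (h.trans (Int.le_ceil r))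
  exact ⟨by exact_mod_cast hlo, by exact_mod_cast hhi⟩

theorem siteBall_finite (r : ℝ) : (siteBall r).Finite :=
  ((finite_Icc (-⌈r⌉) ⌈r⌉).prod (finite_Icc (-⌈r⌉) ⌈r⌉)).subset fun x hx =>
    ⟨mem_Icc_ceil_of_abs_le ((abs_fst_le_siteNorm x).trans hx),
      mem_Icc_ceil_of_abs_le ((abs_snd_le_siteNorm x).trans hx)⟩

theorem siteNorm_neg (x : Site) : siteNorm (-x) = siteNorm x := by
  simp [siteNorm]

theorem neg_mem_siteBall {r : ℝ} {x : Site} (hx : x ∈ siteBall r) : -x ∈ siteBall r := by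
  simpa [siteBall, siteNorm_neg] using hx

theorem exists_pivotal_of_finite {α : Type*} (P : Set α → Prop) {ω S : Set α} (hS : S.Finite)
    (h₀ : ¬ P ω) (h₁ : P (ω ∪ S)) :
    ∃ T ⊆ S, ∃ y ∈ S, ¬ P (ω ∪ T) ∧ P (insert y (ω ∪ T)) := by
  induction S, hS using Set.Finite.induction_on with
  | empty => exact absurd (by simpa using h₁) h₀
  | @insert a s _ _ ih =>
    by_cases hs : P (ω ∪ s)
    · obtain ⟨T, hT, y, hy, hT₀, hT₁⟩ := ih hs
      exact ⟨T, hT.trans (subset_insert a s), y, mem_insert_of_mem a hy, hT₀, hT₁⟩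
    · exact ⟨s, subset_insert a s, a, mem_insert a s, hs, by rwa [← union_insert]⟩

theorem bigPhi_subset_singleton (R₀ : ℝ) (φ : Config → Config) (ω : Config) :
    bigPhi R₀ φ ω ⊆ {0} :=
  fun _ hz => hz.1

theorem zero_mem_bigPhi_iff {R₀ : ℝ} {φ : Config → Config} {ω : Config} :
    (0 : Site) ∈ bigPhi R₀ φ ω ↔ ∃ x ∈ siteBall R₀, -x ∈ φ (shiftConfig x ω) := by
  simp [bigPhi, mem_enhAt_iff]

theorem zero_mem_bigPhi_shiftConfig {R₀ : ℝ} {φ : Config → Config} (hφ : IsEnhancement R₀ φ)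
    (hmono : Monotonic φ) {ω ω' : Config} (hωω' : ω ⊆ ω') {y : Site} (hy : y ∈ φ ω) :
    (0 : Site) ∈ bigPhi R₀ φ (shiftConfig y ω') := by
  refine zero_mem_bigPhi_iff.2 ⟨-y, neg_mem_siteBall (hφ.2.1 ω hy), ?_⟩
  rw [neg_neg, shiftConfig_neg_shiftConfig]
  exact hmono ω ω' hωω' hy

theorem essential_of_essential_bigPhi {R₀ : ℝ} {φ : Config → Config}
    (h : Essential adjZ2 (bigPhi R₀ φ)) : Essential adjZ2 φ := by
  obtain ⟨ω, hno, hyes⟩ := h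
  have h₀ : (0 : Site) ∈ bigPhi R₀ φ ω := by
    by_contra h₀
    refine hno (hyes.mono (union_subset subset_rfl fun z hz => ?_))
    obtain rfl : z = 0 := bigPhi_subset_singleton R₀ φ ω hz
    exact absurd hz h₀
  obtain ⟨x, -, hx⟩ := zero_mem_bigPhi_iff.1 h₀
  refine ⟨shiftConfig x ω, (hasDISRPath_shiftConfig_iff adjZ2_add_right x ω).not.2 hno, ?_⟩
  have hins : HasDISRPath adjZ2 (insert 0 ω) :=
    hyes.mono (union_subset (subset_insert 0 ω)
      ((bigPhi_subset_singleton R₀ φ ω).trans (singleton_subset_iff.2 (mem_insert 0 ω))))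
  have := hins.shiftConfig adjZ2_add_right x
  rw [shiftConfig_insert, zero_sub] at this
  exact this.mono (insert_subset (mem_union_right _ hx) subset_union_left)

theorem essential_bigPhi_of_essential {R₀ : ℝ} {φ : Config → Config} (hφ : IsEnhancement R₀ φ)
    (hmono : Monotonic φ) (h : Essential adjZ2 φ) : Essential adjZ2 (bigPhi R₀ φ) := by
  obtain ⟨ω, hno, hyes⟩ := h
  obtain ⟨T, -, y, hy, hT₀, hT₁⟩ := exists_pivotal_of_finite (HasDISRPath adjZ2)
    ((siteBall_finite R₀).subset (hφ.2.1 ω)) hno hyes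
  refine ⟨shiftConfig y (ω ∪ T),
    (hasDISRPath_shiftConfig_iff adjZ2_add_right y _).not.2 hT₀, ?_⟩
  have := hT₁.shiftConfig adjZ2_add_right y
  rw [shiftConfig_insert, sub_self] at this
  exact this.mono (insert_subset
    (mem_union_right _ (zero_mem_bigPhi_shiftConfig hφ hmono subset_union_left hy))
    subset_union_left)

/-- for a monotonic enhancement function `φ₀` of range `R₀`,
`φ₀` is essential iff `Φ₀` is essential. -/
theorem essential_iff_bigPhi_essential
    (R₀ : ℝ) (φ : Config → Config) (hφ : IsEnhancement R₀ φ) (hmono : Monotonic φ) :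
    Essential adjZ2 φ ↔ Essential adjZ2 (bigPhi R₀ φ) :=
  ⟨essential_bigPhi_of_essential hφ hmono, essential_of_essential_bigPhi⟩

end PercEnh
end

section
/- Let λ* be a finite self-repelling *-loop in the square lattice ℤ² such that the bounded ℤ²-connected component of ℤ² ∖ V(λ*) is nonempty. Then every site of λ* has at least one ℤ²-neighbor in the bounded component of ℤ² ∖ V(λ*) and at least one ℤ²-neighbor in the unbounded component of ℤ² ∖ V(λ*). -/
/-!
Walk once around the loop. Among the eight sites surrounding `γ j` only `γ (j - 1)` and
`γ (j + 1)` lie on the loop (self-repellence), so a neighbour of `γ j` off the loop can walk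
around this ring of eight sites, in the direction avoiding `γ (j - 1)`, to a neighbour of
`γ (j + 1)`; hence every loop site has a neighbour in each component touched by the neighbours of
one loop site. The bounded component touches the loop just above its highest site, and the site
just above the highest site of the loop lies in the unbounded component.
-/

open MeasureTheory Filter Set Topology
open scoped ENNReal

namespace PercEnh

/-- A self-repelling `*`-loop: a cyclic sequence of `k ≥ 3` distinct sites in which
exactly the cyclically consecutive pairs are `*`-adjacent. -/
def IsSelfRepellingStarLoop (k : ℕ) (γ : ZMod k → Site) : Prop :=
  3 ≤ k ∧ Function.Injective γ ∧
    ∀ i j : ZMod k, adjStar (γ i) (γ j) ↔ (j = i + 1 ∨ i = j + 1)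

/-- `x` and `y` are joined by a `ℤ²`-path all of whose sites avoid `V`. -/
def avoidConn (V : Set Site) (x y : Site) : Prop :=
  ∃ l : List Site, IsPathOn adjZ2 l ∧ (∀ z ∈ l, z ∉ V) ∧
    l.head? = some x ∧ l.getLast? = some y

/-- The `ℤ²`-connected component of `x` in `ℤ² ∖ V`. -/
def component (V : Set Site) (x : Site) : Set Site := {y | avoidConn V x y}

/-- `A` is a `ℤ²`-connected component of `ℤ² ∖ V`. -/
def IsComponentOf (V A : Set Site) : Prop := ∃ x, x ∉ V ∧ A = component V x

section Paths

variable {V : Set Site} {x y z : Site}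

lemma adjZ2_comm : adjZ2 x y ↔ adjZ2 y x := by
  simp only [adjZ2, abs_sub_comm x.1, abs_sub_comm x.2]

lemma adjZ2_add_left_iff (a : Site) : adjZ2 (a + x) (a + y) ↔ adjZ2 x y := by
  simp [adjZ2]

lemma adjZ2_add_up (w : Site) : adjZ2 w (w + (0, 1)) := by
  simp [adjZ2]

lemma avoidConn_refl (hx : x ∉ V) : avoidConn V x x :=
  ⟨[x], ⟨by simp, by simp, List.isChain_singleton _⟩, by simpa using hx, by simp, by simp⟩

lemma avoidConn.not_mem_right (h : avoidConn V x y) : y ∉ V := by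
  obtain ⟨l, -, hV, -, hl⟩ := h
  exact hV y (List.mem_of_getLast? hl)

lemma avoidConn.extend (h : avoidConn V x y) (hyz : adjZ2 y z) (hz : z ∉ V) :
    avoidConn V x z := by
  obtain ⟨l, ⟨hne, hnd, hch⟩, hV, hh, hl⟩ := h
  by_cases hzl : z ∈ l
  · obtain ⟨s, t, rfl⟩ := List.append_of_mem hzl
    have hpre : s ++ [z] <+: s ++ z :: t := ⟨t, by simp⟩
    refine ⟨s ++ [z], ⟨by simp, hnd.sublist hpre.sublist, hch.prefix hpre⟩,
      fun w hw => hV w (hpre.subset hw), ?_, by simp⟩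
    cases s <;> simp_all
  · refine ⟨l ++ [z], ⟨by simp, ?_, ?_⟩, ?_, ?_, by simp⟩
    · exact hnd.append (List.nodup_singleton z) (by simpa using hzl)
    · exact hch.append (List.isChain_singleton z) (by simp_all)
    · intro w hw
      rcases List.mem_append.1 hw with hw | hw <;> simp_all
    · rwa [List.head?_append_of_ne_nil _ hne]

lemma avoidConn_iff_reflTransGen :
    avoidConn V x y ↔
      x ∉ V ∧ Relation.ReflTransGen (fun a b => adjZ2 a b ∧ a ∉ V ∧ b ∉ V) x y := by
  constructor
  · rintro ⟨l, ⟨hne, -, hch⟩, hV, hh, hl⟩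
    obtain ⟨a, t, rfl⟩ := List.exists_cons_of_ne_nil hne
    obtain rfl : a = x := by simpa using hh
    refine ⟨hV a List.mem_cons_self, List.relationReflTransGen_of_exists_isChain_cons t
      (hch.imp_of_mem_imp fun b c hb hc hbc => ⟨hbc, hV b hb, hV c hc⟩) ?_⟩
    simpa [List.getLast?_eq_some_getLast] using hl
  · rintro ⟨hx, h⟩
    induction h with
    | refl => exact avoidConn_refl hx
    | tail _ hbc ih => exact ih.extend hbc.1 hbc.2.2

lemma avoidConn.symm (h : avoidConn V x y) : avoidConn V y x := by
  refine avoidConn_iff_reflTransGen.2 ⟨h.not_mem_right, ?_⟩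
  exact Relation.ReflTransGen.mono (fun a b hab => ⟨adjZ2_comm.1 hab.1, hab.2.2, hab.2.1⟩) _ _
    (Relation.reflTransGen_swap.2 (avoidConn_iff_reflTransGen.1 h).2)

lemma avoidConn.trans (hxy : avoidConn V x y) (hyz : avoidConn V y z) : avoidConn V x z := by
  rw [avoidConn_iff_reflTransGen] at *
  exact ⟨hxy.1, hxy.2.trans hyz.2⟩

lemma component_eq_of_avoidConn (h : avoidConn V x y) : component V x = component V y :=
  Set.ext fun _ => ⟨h.symm.trans, h.trans⟩

lemma avoidConn_of_adjZ2_succ {f : ℕ → Site} {n : ℕ}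
    (hadj : ∀ t < n, adjZ2 (f t) (f (t + 1))) (hV : ∀ t ≤ n, f t ∉ V) :
    avoidConn V (f 0) (f n) := by
  induction n with
  | zero => exact avoidConn_refl (hV 0 le_rfl)
  | succ n ih =>
    exact (ih (fun t ht => hadj t (by omega)) (fun t ht => hV t (by omega))).extend
      (hadj n n.lt_succ_self) (hV _ le_rfl)

end Paths

section Ring8

def ring8 : ZMod 8 → Site :=
  ![(1, 0), (1, 1), (0, 1), (-1, 1), (-1, 0), (-1, -1), (0, -1), (1, -1)]

lemma ring8_injective : Function.Injective ring8 := by decide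

lemma adjZ2_ring8_add (i : ZMod 8) {s : ZMod 8} (hs : s = 1 ∨ s = -1) :
    adjZ2 (ring8 i) (ring8 (i + s)) := by
  unfold adjZ2
  rcases hs with rfl | rfl <;> revert i <;> decide

lemma exists_ring8_eq {d : Site} (h₁ : |d.1| ≤ 1) (h₂ : |d.2| ≤ 1) (h₀ : d ≠ 0) :
    ∃ i, ring8 i = d := by
  obtain ⟨a, b⟩ := d
  obtain ⟨ha, ha'⟩ := abs_le.1 h₁
  obtain ⟨hb, hb'⟩ := abs_le.1 h₂
  revert h₀
  interval_cases a <;> interval_cases b <;> decide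

lemma exists_arc_avoiding (a b c : ZMod 8) (hab : a ≠ b) (hca : c ≠ a) (hcb : c ≠ b) :
    ∃ s : ZMod 8, (s = 1 ∨ s = -1) ∧ ∃ n < 8, c + (n + 1 : ℕ) * s = a ∧
      ∀ t ≤ n, c + t * s ≠ b ∧ c + t * s ≠ a := by
  revert a b c
  decide

variable {x y : Site}

lemma adjStar_iff_exists_ring8 : adjStar x y ↔ ∃ i, y = x + ring8 i := by
  constructor
  · rintro ⟨hne, hmax⟩
    obtain ⟨i, hi⟩ := exists_ring8_eq (d := y - x)
      (by simpa [abs_sub_comm] using (le_max_left _ _).trans hmax.le)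
      (by simpa [abs_sub_comm] using (le_max_right _ _).trans hmax.le)
      (sub_ne_zero.2 hne.symm)
    exact ⟨i, by rw [hi, add_sub_cancel]⟩
  · rintro ⟨i, rfl⟩
    have : ∀ i, ring8 i ≠ 0 ∧ max |(ring8 i).1| |(ring8 i).2| = 1 := by decide
    exact ⟨by simpa using (this i).1, by simpa using (this i).2⟩

lemma adjZ2.adjStar (h : adjZ2 x y) : adjStar x y := by
  unfold adjZ2 at h
  have h₁ := abs_nonneg (x.1 - y.1)
  have h₂ := abs_nonneg (x.2 - y.2)
  obtain ⟨i, hi⟩ := exists_ring8_eq (d := y - x)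
    (by simp only [Prod.fst_sub, abs_sub_comm y.1]; linarith)
    (by simp only [Prod.snd_sub, abs_sub_comm y.2]; linarith)
    (fun h₀ => by simp_all [sub_eq_zero])
  exact adjStar_iff_exists_ring8.2 ⟨i, by rw [hi, add_sub_cancel]⟩

end Ring8

section Extremal

variable {V : Set Site} {x z : Site}

lemma exists_adj_component_finite (hx : x ∉ V) (hfin : (component V x).Finite) :
    ∃ v ∈ V, ∃ w, adjZ2 v w ∧ w ∉ V ∧ (component V w).Finite := by
  obtain ⟨w, hxw, hmax⟩ := hfin.toFinset.exists_max_image Prod.snd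
    ⟨x, hfin.mem_toFinset.2 (avoidConn_refl hx)⟩
  rw [Set.Finite.mem_toFinset] at hxw
  have hup : w + (0, 1) ∈ V := by
    by_contra hup
    have := hmax _ (hfin.mem_toFinset.2 (hxw.extend (adjZ2_add_up w) hup))
    simp at this
  refine ⟨_, hup, w, adjZ2_comm.1 (adjZ2_add_up w), hxw.not_mem_right, ?_⟩
  rwa [← component_eq_of_avoidConn hxw]

lemma component_infinite_of_forall_snd_lt (hz : ∀ v ∈ V, v.2 < z.2) :
    (component V z).Infinite := by
  set f : ℕ → Site := fun n => z + (0, (n : ℤ))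
  have hfV : ∀ n, f n ∉ V := fun n hn => by
    have := hz _ hn
    simp [f] at this
    omega
  refine Set.infinite_of_injective_forall_mem (f := f) (fun m n e => by simpa [f] using e)
    fun n => ?_
  simpa [f, component, Prod.mk_zero_zero] using
    avoidConn_of_adjZ2_succ (V := V) (f := f) (n := n)
      (fun t _ => by simpa [f, add_assoc] using adjZ2_add_up (f t)) (fun t _ => hfV t)

lemma exists_adj_component_infinite (hV : V.Finite) (hne : V.Nonempty) :
    ∃ v ∈ V, ∃ w, adjZ2 v w ∧ w ∉ V ∧ (component V w).Infinite := by
  obtain ⟨v, hv, hmax⟩ := hV.toFinset.exists_max_image Prod.snd (by simpa using hne)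
  have hlt : ∀ u ∈ V, u.2 < (v + (0, 1)).2 := fun u hu => by
    simpa [Int.lt_add_one_iff] using hmax u (hV.mem_toFinset.2 hu)
  exact ⟨v, hV.mem_toFinset.1 hv, _, adjZ2_add_up v, fun h => (hlt _ h).false,
    component_infinite_of_forall_snd_lt hlt⟩

end Extremal

namespace IsSelfRepellingStarLoop

variable {k : ℕ} {γ : ZMod k → Site}

lemma neZero (h : IsSelfRepellingStarLoop k γ) : NeZero k :=
  ⟨by have := h.1; omega⟩

lemma pred_ne_succ (h : IsSelfRepellingStarLoop k γ) (j : ZMod k) : γ (j - 1) ≠ γ (j + 1) := by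
  intro e
  have h2 : ((2 : ℕ) : ZMod k) ≠ 0 := by
    rw [Ne, ZMod.natCast_eq_zero_iff]
    exact fun hk => by have := Nat.le_of_dvd two_pos hk; have := h.1; omega
  apply h2
  have := h.2.1 e
  push_cast
  linear_combination -this

lemma eq_pred_or_succ_of_adjStar (h : IsSelfRepellingStarLoop k γ) {j : ZMod k} {v : Site}
    (hv : v ∈ range γ) (hadj : adjStar (γ j) v) : v = γ (j - 1) ∨ v = γ (j + 1) := by
  obtain ⟨j', rfl⟩ := hv
  rcases (h.2.2 j j').1 hadj with rfl | rfl
  · exact Or.inr rfl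
  · exact Or.inl (by rw [add_sub_cancel_right])

lemma exists_adj_succ (h : IsSelfRepellingStarLoop k γ) {j : ZMod k} {y : Site}
    (hy : adjZ2 (γ j) y) (hyV : y ∉ range γ) :
    ∃ y', adjZ2 (γ (j + 1)) y' ∧ avoidConn (range γ) y y' := by
  obtain ⟨ip, hp⟩ := adjStar_iff_exists_ring8.1 ((h.2.2 j (j + 1)).2 (Or.inl rfl))
  obtain ⟨iq, hq⟩ :=
    adjStar_iff_exists_ring8.1 ((h.2.2 j (j - 1)).2 (Or.inr (sub_add_cancel j 1).symm))
  obtain ⟨iy, rfl⟩ := adjStar_iff_exists_ring8.1 hy.adjStar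
  have hoff : ∀ i, γ j + ring8 i ∈ range γ → i = iq ∨ i = ip := fun i hi => by
    rcases h.eq_pred_or_succ_of_adjStar hi (adjStar_iff_exists_ring8.2 ⟨i, rfl⟩) with e | e
    · exact Or.inl (ring8_injective (add_left_cancel (e.trans hq)))
    · exact Or.inr (ring8_injective (add_left_cancel (e.trans hp)))
  obtain ⟨s, hs, n, -, hend, harc⟩ := exists_arc_avoiding ip iq iy
    (fun e => h.pred_ne_succ j (by rw [hp, hq, e]))
    (fun e => hyV ⟨j + 1, by rw [hp, e]⟩) (fun e => hyV ⟨j - 1, by rw [hq, e]⟩)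
  set f : ℕ → Site := fun t => γ j + ring8 (iy + t * s)
  have hstep : ∀ t : ℕ, adjZ2 (f t) (f (t + 1)) := fun t => by
    simpa [f, adjZ2_add_left_iff, add_mul, add_assoc] using adjZ2_ring8_add (iy + t * s) hs
  refine ⟨f n, ?_, ?_⟩
  · rw [adjZ2_comm, hp, ← hend]
    exact hstep n
  · simpa [f] using avoidConn_of_adjZ2_succ (V := range γ) (f := f) (n := n)
      (fun t _ => hstep t) fun t ht hft => (hoff _ hft).elim (harc t ht).1 (harc t ht).2

lemma exists_adj_component_eq (h : IsSelfRepellingStarLoop k γ) {i₀ : ZMod k} {y : Site}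
    (hy : adjZ2 (γ i₀) y) (hyV : y ∉ range γ) (i : ZMod k) :
    ∃ y', adjZ2 (γ i) y' ∧ y' ∉ range γ ∧
      component (range γ) y' = component (range γ) y := by
  have := h.neZero
  suffices ∀ n : ℕ, ∃ y', adjZ2 (γ (i₀ + n)) y' ∧ avoidConn (range γ) y y' by
    obtain ⟨y', hy', hyy'⟩ := this (i - i₀).val
    rw [ZMod.natCast_zmod_val, add_sub_cancel] at hy'
    exact ⟨y', hy', hyy'.not_mem_right, (component_eq_of_avoidConn hyy').symm⟩
  intro n
  induction n with
  | zero => exact ⟨y, by simpa using hy, avoidConn_refl hyV⟩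
  | succ n ih =>
    obtain ⟨y', hy', hyy'⟩ := ih
    obtain ⟨y'', hy'', hy'y''⟩ := h.exists_adj_succ hy' hyy'.not_mem_right
    exact ⟨y'', by simpa [add_assoc] using hy'', hyy'.trans hy'y''⟩

end IsSelfRepellingStarLoop

/-- let `λ*` be a finite self-repelling `*`-loop in `ℤ²` whose
bounded complementary component is nonempty. Then every site of `λ*` has at least one
`ℤ²`-neighbor in the bounded component of `ℤ² ∖ V(λ*)` and at least one `ℤ²`-neighbor
in the unbounded component. -/
theorem loop_sites_have_neighbors_in_both_components (k : ℕ) (γ : ZMod k → Site)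
    (h : IsSelfRepellingStarLoop k γ)
    (hbdd : ∃ x, x ∉ Set.range γ ∧ (component (Set.range γ) x).Finite) :
    ∀ i : ZMod k,
      (∃ y, adjZ2 (γ i) y ∧ y ∉ Set.range γ ∧ (component (Set.range γ) y).Finite) ∧
      (∃ y, adjZ2 (γ i) y ∧ y ∉ Set.range γ ∧ (component (Set.range γ) y).Infinite) := by
  have := h.neZero
  obtain ⟨x, hx, hfin⟩ := hbdd
  obtain ⟨-, ⟨i₁, rfl⟩, y₁, hy₁, hy₁V, hy₁fin⟩ :=
    exists_adj_component_finite hx hfin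
  obtain ⟨-, ⟨i₂, rfl⟩, y₂, hy₂, hy₂V, hy₂inf⟩ :=
    exists_adj_component_infinite (Set.finite_range γ) (Set.range_nonempty γ)
  intro i
  obtain ⟨y, hy, hyV, hyc⟩ := h.exists_adj_component_eq hy₁ hy₁V i
  obtain ⟨y', hy', hy'V, hy'c⟩ := h.exists_adj_component_eq hy₂ hy₂V i
  exact ⟨⟨y, hy, hyV, hyc ▸ hy₁fin⟩, ⟨y', hy', hy'V, hy'c ▸ hy₂inf⟩⟩

end PercEnh
end
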